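/- In SL(2,ℤ), the product (X₁⁻¹⁰X₂X₁¹⁰)·(X₁⁻⁶X₂X₁⁶)·(X₁⁻¹X₂X₁)·(X₁²X₂X₁⁻²)·(X₁⁶X₂X₁⁻⁶)·(X₁¹¹X₂X₁⁻¹¹) equals −X₁⁻²⁴. (Hence the sequence T̃₆ with conjugating exponents (10, 6, 1, −2, −6, −11) has total monodromy ±X₁^m and is a candidate Hurwitz system of a genus-1 simplified broken Lefschetz fibration with six Lefschetz singularities.) -/

import Mathlib

/-- `SL(2,ℤ)`. -/
abbrev SL2Z := Matrix.SpecialLinearGroup (Fin 2) ℤ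

/-- The matrix `X₁` with rows `(1,0),(1,1)`. -/
def X1 : SL2Z := ⟨!![1, 0; 1, 1], by norm_num [Matrix.det_fin_two_of]⟩

/-- The matrix `X₂` with rows `(1,-1),(0,1)`. -/
def X2 : SL2Z := ⟨!![1, -1; 0, 1], by norm_num [Matrix.det_fin_two_of]⟩

/-- `-E`, the negative of the identity matrix, as an element of `SL(2,ℤ)`. -/
def negE : SL2Z := ⟨!![-1, 0; 0, -1], by norm_num [Matrix.det_fin_two_of]⟩

open Matrix.SpecialLinearGroup

lemma coe_X1_zpow (n : ℤ) : ((X1 ^ n : SL2Z) : Matrix (Fin 2) (Fin 2) ℤ) = !![1, 0; n, 1] := by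
  induction n using Int.induction_on with
  | zero => rw [zpow_zero, coe_one, Matrix.one_fin_two]
  | succ n ih =>
    rw [zpow_add_one, coe_mul, ih]
    simp [X1]
  | pred n ih =>
    rw [zpow_sub_one, coe_mul, ih, coe_inv]
    simp [X1, Matrix.adjugate_fin_two, sub_eq_add_neg]

/-- the total monodromy of the candidate Hurwitz system `T̃₆`
equals `−X₁⁻²⁴` in `SL(2,ℤ)`. -/
theorem tilde_T6_total_monodromy :
    (X1 ^ (-10 : ℤ) * X2 * X1 ^ (10 : ℤ)) * (X1 ^ (-6 : ℤ) * X2 * X1 ^ (6 : ℤ))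
      * (X1 ^ (-1 : ℤ) * X2 * X1 ^ (1 : ℤ)) * (X1 ^ (2 : ℤ) * X2 * X1 ^ (-2 : ℤ))
      * (X1 ^ (6 : ℤ) * X2 * X1 ^ (-6 : ℤ)) * (X1 ^ (11 : ℤ) * X2 * X1 ^ (-11 : ℤ))
      = negE * X1 ^ (-24 : ℤ) := by
  apply Subtype.ext
  simp only [coe_mul, coe_X1_zpow]
  decide
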